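/- Let N ≥ 2. Define N-periodic sequences (α̃_n), (β̃_n) by α̃_{kN+i} = α_i/√2 if i ∈ {0, N−1} and α̃_{kN+i} = α_i otherwise, and β̃_{kN+i} = β_0/2 if i = 0 and β̃_{kN+i} = β_i otherwise (k ∈ ℤ, i ∈ {0,…,N−1}). Let 𝔅̃_j(x) be the 2×2 matrix with first row (0, 1) and second row (−α̃_{j−1}/α̃_j, (x − β̃_j)/α̃_j), and set 𝔛̃_n(x) = 𝔅̃_{n+N−1}(x) ⋯ 𝔅̃_n(x). Then for all x: 𝒳_1(x) = −diag(1/√2, 1) · 𝔛̃_1(x) · diag(√2, 1); 𝒳_j(x) = −𝔛̃_j(x) for j ∈ {2, 3, …, N−1}; and 𝒳_N(x) = −diag(√2, 1) · 𝔛̃_0(x) · diag(1/√2, 1). -/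

import Mathlib

/-!
Put `s_k = √2` for `k ≡ N - 1 (mod N)`, `s_k = 1` otherwise, and `G_k = diag(s_{k-1}, s_k)`.
Since `α̃_k = α_k / (s_{k-1} s_k)` and `β̃_k = β_k / s_{k-1}²`, the modified transfer matrices are
gauge transforms `𝔅̃_k(x) G_{k-1} = G_k 𝔅_k(s_{k-1}² x)` of the original ones, with the spectral
parameter doubled exactly at the indices `k ≡ 0`, where `𝔅_0(2x) = -𝒞(x)`. Telescoping over a
period gives `𝔛̃_j(x) G_{j-1} = G_{j-1} P_j`, where the period product `P_j` starting at `j` is a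
cyclic rotation of `𝔅_{N-1}(x) ⋯ 𝔅_1(x) (-𝒞(x))`, i.e. `P_j = -𝒳_j(x)`. The three identities are
this conjugation for `G_0 = diag(√2, 1)`, `G_{j-1} = 1` and `G_{N-1} = √2 diag(1/√2, 1)`.
-/
open Filter Topology

noncomputable section

abbrev Mat2 := Matrix (Fin 2) (Fin 2) ℝ

/-- The transfer matrix `𝔅_j(x)` built from (N-periodic) sequences `(α_n)`, `(β_n)`. -/
def frakB (α β : ℤ → ℝ) (j : ℤ) (x : ℝ) : Mat2 :=
  !![0, 1; -(α (j - 1)) / α j, (x - β j) / α j]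

/-- Product in decreasing index order with integer starting point:
`prodDZ C n0 len = C (n0+len-1) ⋯ C n0`. -/
def prodDZ (C : ℤ → Mat2) (n0 : ℤ) : ℕ → Mat2
  | 0 => 1
  | (len + 1) => C (n0 + len) * prodDZ C n0 len

/-- The matrix `𝒞(x)`. -/
def Cmat (α β : ℤ → ℝ) (N : ℕ) (x : ℝ) : Mat2 :=
  !![0, -1; α ((N : ℤ) - 1) / α 0, -(2 * x - β 0) / α 0]

/-- `𝒳_i(x) = (∏_{j=1}^{i−1} 𝔅_j(x)) · 𝒞(x) · (∏_{j=i}^{N−1} 𝔅_j(x))`. -/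
def calX (α β : ℤ → ℝ) (N i : ℕ) (x : ℝ) : Mat2 :=
  prodDZ (fun j => frakB α β j x) 1 (i - 1) * Cmat α β N x *
    prodDZ (fun j => frakB α β j x) (i : ℤ) (N - i)

/-- The modified sequence `α̃`: at indices congruent to `0` or `N−1` mod `N`, divide by `√2`. -/
def talpha (α : ℤ → ℝ) (N : ℕ) (n : ℤ) : ℝ :=
  if n % (N : ℤ) = 0 ∨ n % (N : ℤ) = (N : ℤ) - 1 then α n / Real.sqrt 2 else α n

/-- The modified sequence `β̃`: at indices congruent to `0` mod `N`, divide by `2`. -/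
def tbeta (β : ℤ → ℝ) (N : ℕ) (n : ℤ) : ℝ :=
  if n % (N : ℤ) = 0 then β n / 2 else β n

/-- `𝔛̃_n(x) = 𝔅̃_{n+N−1}(x) ⋯ 𝔅̃_n(x)` built from `α̃`, `β̃`. -/
def tfrakX (α β : ℤ → ℝ) (N : ℕ) (n : ℤ) (x : ℝ) : Mat2 :=
  prodDZ (fun j => frakB (talpha α N) (tbeta β N) j x) n N

theorem Int.sub_one_emod_eq_sub_one_iff {k n : ℤ} (hn : 0 < n) :
    (k - 1) % n = n - 1 ↔ k % n = 0 := by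
  have h : (n - 1) % n = n - 1 := Int.emod_eq_of_lt (by omega) (by omega)
  rw [← Int.dvd_iff_emod_eq_zero, ← dvd_sub_self_left, show n - k = n - 1 - (k - 1) by ring,
    ← Int.modEq_iff_dvd, Int.ModEq, h]

theorem eq_neg_mul_mul_of_mul_eq_neg_mul {R : Type*} [Ring R] {M X G G' : R} (hG : G' * G = 1)
    (h : M * G = -(G * X)) : X = -(G' * M * G) := by
  rw [mul_assoc, h, mul_neg, neg_neg, ← mul_assoc, hG, one_mul]

theorem prodDZ_add (C : ℤ → Mat2) (a : ℤ) (l₁ l₂ : ℕ) :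
    prodDZ C a (l₁ + l₂) = prodDZ C (a + l₁) l₂ * prodDZ C a l₁ := by
  induction l₂ with
  | zero => simp [prodDZ]
  | succ l₂ ih =>
    rw [← add_assoc, prodDZ, prodDZ, ih, ← mul_assoc]
    push_cast; ring_nf

theorem prodDZ_congr {C C' : ℤ → Mat2} {a : ℤ} {len : ℕ}
    (h : ∀ k : ℕ, k < len → C (a + k) = C' (a + k)) :
    prodDZ C a len = prodDZ C' a len := by
  induction len with
  | zero => rfl
  | succ len ih => rw [prodDZ, prodDZ, h len len.lt_succ_self, ih fun k hk => h k (by omega)]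

theorem prodDZ_add_period {C : ℤ → Mat2} {N : ℤ} (hC : Function.Periodic C N) (a : ℤ)
    (len : ℕ) : prodDZ C (a + N) len = prodDZ C a len := by
  induction len with
  | zero => rfl
  | succ len ih => rw [prodDZ, prodDZ, ih, add_right_comm, hC]

theorem prodDZ_mul_eq_mul_prodDZ {C C' G : ℤ → Mat2} (h : ∀ k, C' k * G (k - 1) = G k * C k)
    (a : ℤ) (len : ℕ) : prodDZ C' a len * G (a - 1) = G (a + len - 1) * prodDZ C a len := by
  induction len with
  | zero => simp [prodDZ]
  | succ len ih =>
    rw [prodDZ, prodDZ, mul_assoc, ih, ← mul_assoc, show a + len = a + (len + 1 : ℕ) - 1 by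
      push_cast; ring, h, mul_assoc]

theorem prodDZ_rotate {C : ℤ → Mat2} {N : ℕ} (hC : Function.Periodic C N) {j : ℕ}
    (hj₁ : 1 ≤ j) (hjN : j ≤ N) :
    prodDZ C j N = prodDZ C 1 (j - 1) * C 0 * prodDZ C j (N - j) := by
  have hsplit : N = (N - j + 1) + (j - 1) := by omega
  rw [hsplit, prodDZ_add, prodDZ, ← hsplit, mul_assoc,
    show (j : ℤ) + (N - j + 1 : ℕ) = 1 + N by push_cast; omega, prodDZ_add_period hC,
    show (j : ℤ) + (N - j : ℕ) = 0 + N by omega, hC]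

def gaugeScale (N : ℕ) (k : ℤ) : ℝ := if k % N = N - 1 then √2 else 1

def blendGauge (N : ℕ) (k : ℤ) : Mat2 := !![gaugeScale N (k - 1), 0; 0, gaugeScale N k]

def blendB (α β : ℤ → ℝ) (N : ℕ) (x : ℝ) (k : ℤ) : Mat2 :=
  frakB α β k (gaugeScale N (k - 1) ^ 2 * x)

section Gauge

variable {N : ℕ}

theorem gaugeScale_ne_zero (k : ℤ) : gaugeScale N k ≠ 0 := by
  unfold gaugeScale; split_ifs <;> positivity

theorem gaugeScale_periodic : Function.Periodic (gaugeScale N) N := by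
  intro k
  simp [gaugeScale]

theorem blendGauge_periodic : Function.Periodic (blendGauge N) N := by
  intro k
  simp only [blendGauge, add_sub_right_comm, gaugeScale_periodic _]

theorem gaugeScale_eq_one {k : ℤ} (hk₀ : 0 ≤ k) (hkN : k < N - 1) : gaugeScale N k = 1 := by
  rw [gaugeScale, Int.emod_eq_of_lt hk₀ (by omega), if_neg hkN.ne]

theorem gaugeScale_neg_one (hN : 0 < N) : gaugeScale N (-1) = √2 := by
  rw [gaugeScale, if_pos]
  simpa using (Int.sub_one_emod_eq_sub_one_iff (k := 0) (show (0 : ℤ) < N by omega)).2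

theorem blendGauge_zero (hN : 2 ≤ N) : blendGauge N 0 = !![√2, 0; 0, 1] := by
  rw [blendGauge, zero_sub, gaugeScale_neg_one (by omega), gaugeScale_eq_one le_rfl (by omega)]

theorem blendGauge_neg_one (hN : 2 ≤ N) : blendGauge N (-1) = !![1, 0; 0, √2] := by
  rw [blendGauge, ← gaugeScale_periodic, gaugeScale_eq_one (by omega) (by omega),
    gaugeScale_neg_one (by omega)]

theorem blendGauge_eq_one {k : ℤ} (hk₁ : 1 ≤ k) (hkN : k ≤ N - 2) : blendGauge N k = 1 := by
  rw [blendGauge, gaugeScale_eq_one (by omega) (by omega), gaugeScale_eq_one (by omega) (by omega),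
    Matrix.one_fin_two]

end Gauge

section Blend

variable {N : ℕ} {α β : ℤ → ℝ}

theorem frakB_periodic (hα : Function.Periodic α N) (hβ : Function.Periodic β N) (y : ℝ) :
    Function.Periodic (fun k => frakB α β k y) N := by
  intro k
  simp only [frakB, add_sub_right_comm, hα _, hβ _]

theorem blendB_periodic (hα : Function.Periodic α N) (hβ : Function.Periodic β N) (x : ℝ) :
    Function.Periodic (blendB α β N x) N := by
  intro k
  simp only [blendB, add_sub_right_comm, gaugeScale_periodic _, frakB_periodic hα hβ _ _]

theorem blendB_eq_frakB {k : ℤ} (hk₁ : 1 ≤ k) (hkN : k < N) (x : ℝ) :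
    blendB α β N x k = frakB α β k x := by
  have : (k - 1) % N = k - 1 := Int.emod_eq_of_lt (by omega) (by omega)
  simp [blendB, gaugeScale, this, hkN.ne]

theorem blendB_zero (hN : 0 < N) (hα : Function.Periodic α N) (x : ℝ) :
    blendB α β N x 0 = -Cmat α β N x := by
  have : (0 - 1 : ℤ) % N = N - 1 := (Int.sub_one_emod_eq_sub_one_iff (by omega)).2 (by simp)
  have hα' : α (0 - 1) = α (N - 1) := by rw [← hα]; ring_nf
  simp only [blendB, gaugeScale, this, if_true, Real.sq_sqrt zero_le_two, frakB, Cmat, hα', neg_div,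
    Matrix.neg_of, Matrix.neg_cons, Matrix.neg_empty, neg_neg, neg_zero]

theorem prodDZ_blendB_eq_neg_calX (hα : Function.Periodic α N) (hβ : Function.Periodic β N)
    (x : ℝ) {j : ℕ} (hj₁ : 1 ≤ j) (hjN : j ≤ N) :
    prodDZ (blendB α β N x) j N = -calX α β N j x := by
  have hfrak {a : ℤ} {len : ℕ} (ha : 1 ≤ a) (hlen : a + len ≤ N) :
      prodDZ (blendB α β N x) a len = prodDZ (fun k => frakB α β k x) a len :=
    prodDZ_congr fun k hk => blendB_eq_frakB (by omega) (by omega) x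
  rw [prodDZ_rotate (blendB_periodic hα hβ x) hj₁ hjN, hfrak le_rfl (by omega),
    hfrak (by omega) (by omega), blendB_zero (by omega) hα, calX]
  simp

theorem talpha_eq_div_gaugeScale (hN : 2 ≤ N) (k : ℤ) :
    talpha α N k = α k / (gaugeScale N (k - 1) * gaugeScale N k) := by
  unfold talpha gaugeScale
  simp only [Int.sub_one_emod_eq_sub_one_iff (show (0 : ℤ) < N by omega)]
  split_ifs <;> first | omega | simp_all

theorem tbeta_eq_div_gaugeScale (hN : 0 < N) (k : ℤ) :
    tbeta β N k = β k / gaugeScale N (k - 1) ^ 2 := by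
  unfold tbeta gaugeScale
  simp only [Int.sub_one_emod_eq_sub_one_iff (show (0 : ℤ) < N by omega)]
  split_ifs <;> simp

theorem frakB_talpha_tbeta_mul_blendGauge (hN : 2 ≤ N) (x : ℝ) (k : ℤ) :
    frakB (talpha α N) (tbeta β N) k x * blendGauge N (k - 1) =
      blendGauge N k * blendB α β N x k := by
  have h₀ := gaugeScale_ne_zero (N := N) k
  have h₁ := gaugeScale_ne_zero (N := N) (k - 1)
  have h₂ := gaugeScale_ne_zero (N := N) (k - 1 - 1)
  simp only [frakB, blendB, blendGauge, talpha_eq_div_gaugeScale hN,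
    tbeta_eq_div_gaugeScale (show 0 < N by omega)]
  rw [Matrix.mul_fin_two, Matrix.mul_fin_two]
  congr 1
  refine Matrix.vec2_eq (Matrix.vec2_eq ?_ ?_) (Matrix.vec2_eq ?_ ?_) <;> field_simp <;> ring

theorem tfrakX_mul_blendGauge (hN : 2 ≤ N) (x : ℝ) (n : ℤ) :
    tfrakX α β N n x * blendGauge N (n - 1) =
      blendGauge N (n - 1) * prodDZ (blendB α β N x) n N := by
  rw [tfrakX, prodDZ_mul_eq_mul_prodDZ (frakB_talpha_tbeta_mul_blendGauge hN x),
    add_sub_right_comm, blendGauge_periodic]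

theorem tfrakX_mul_blendGauge_eq_neg (hN : 2 ≤ N) (hα : Function.Periodic α N)
    (hβ : Function.Periodic β N) (x : ℝ) {j : ℕ} (hj₁ : 1 ≤ j) (hjN : j ≤ N) :
    tfrakX α β N j x * blendGauge N (j - 1) = -(blendGauge N (j - 1) * calX α β N j x) := by
  rw [tfrakX_mul_blendGauge hN, prodDZ_blendB_eq_neg_calX hα hβ x hj₁ hjN, mul_neg]

theorem tfrakX_zero_mul_blendGauge_eq_neg (hN : 2 ≤ N) (hα : Function.Periodic α N)
    (hβ : Function.Periodic β N) (x : ℝ) :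
    tfrakX α β N 0 x * blendGauge N (-1) = -(blendGauge N (-1) * calX α β N N x) := by
  rw [← zero_sub, tfrakX_mul_blendGauge hN, ← prodDZ_add_period (blendB_periodic hα hβ x),
    zero_add, prodDZ_blendB_eq_neg_calX hα hβ x (by omega) le_rfl, mul_neg]

end Blend

theorem blend_matrices_eq_modified_transfer_general
    (N : ℕ) (hN : 2 ≤ N)
    (α β : ℤ → ℝ)
    (hαper : ∀ n : ℤ, α (n + N) = α n) (hβper : ∀ n : ℤ, β (n + N) = β n) :
    ∀ x : ℝ,
      calX α β N 1 x =
        -(!![1 / Real.sqrt 2, 0; 0, 1] * tfrakX α β N 1 x * !![Real.sqrt 2, 0; 0, 1]) ∧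
      (∀ j : ℕ, 2 ≤ j → j ≤ N - 1 → calX α β N j x = -(tfrakX α β N (j : ℤ) x)) ∧
      calX α β N N x =
        -(!![Real.sqrt 2, 0; 0, 1] * tfrakX α β N 0 x * !![1 / Real.sqrt 2, 0; 0, 1]) := by
  intro x
  have hsqrt : √2 ≠ 0 := by positivity
  have hD : !![1 / √2, 0; 0, 1] * !![√2, 0; 0, 1] = (1 : Mat2) := by
    ext i j; fin_cases i <;> fin_cases j <;> simp [hsqrt]
  refine ⟨?_, fun j hj₂ hjN => ?_, ?_⟩
  · have h := tfrakX_mul_blendGauge_eq_neg hN hαper hβper x le_rfl (by omega)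
    rw [Nat.cast_one, sub_self, blendGauge_zero hN] at h
    exact eq_neg_mul_mul_of_mul_eq_neg_mul hD h
  · have h := tfrakX_mul_blendGauge_eq_neg hN hαper hβper x (j := j) (by omega) (by omega)
    rw [blendGauge_eq_one (by omega) (by omega), mul_one, one_mul] at h
    rw [h, neg_neg]
  · have h := tfrakX_zero_mul_blendGauge_eq_neg hN hαper hβper x
    have hE : !![1, 0; 0, √2] = √2 • !![1 / √2, 0; 0, (1 : ℝ)] := by
      ext i j; fin_cases i <;> fin_cases j <;> simp [hsqrt]
    rw [blendGauge_neg_one hN, hE, mul_smul_comm, smul_mul_assoc, ← smul_neg] at h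
    refine eq_neg_mul_mul_of_mul_eq_neg_mul ?_ (smul_right_injective Mat2 hsqrt h)
    ext i j; fin_cases i <;> fin_cases j <;> simp [hsqrt]

/-- Claim 6 of the paper. Identities relating the matrices `𝒳_i` of an
`N`-periodic blend to the transfer matrices `𝔛̃` of the modified periodic sequences. -/
theorem blend_matrices_eq_modified_transfer
    (N : ℕ) (hN : 2 ≤ N)
    (α β : ℤ → ℝ) (hα : ∀ n, 0 < α n)
    (hαper : ∀ n : ℤ, α (n + N) = α n) (hβper : ∀ n : ℤ, β (n + N) = β n) :
    ∀ x : ℝ,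
      calX α β N 1 x =
        -(!![1 / Real.sqrt 2, 0; 0, 1] * tfrakX α β N 1 x * !![Real.sqrt 2, 0; 0, 1]) ∧
      (∀ j : ℕ, 2 ≤ j → j ≤ N - 1 → calX α β N j x = -(tfrakX α β N (j : ℤ) x)) ∧
      calX α β N N x =
        -(!![Real.sqrt 2, 0; 0, 1] * tfrakX α β N 0 x * !![1 / Real.sqrt 2, 0; 0, 1]) :=
  blend_matrices_eq_modified_transfer_general N hN α β hαper hβper
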